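/- arXiv:2401.16095 — 2 statements merged into one kernel-verified Lean document; each statement's English description precedes it below -/
import Mathlib

section
/- For every μ ≥ 1 and every v ∈ {0,…,μ−1}^n, let Mod(μ,v) = {w ∈ Σ_n^* : Δ(w) ≡ v (mod μ) componentwise}, and let ModSet(μ,v) be the linear set with base vector v and period set {μ·e_i, −μ·e_i : 1 ≤ i ≤ n}. Then Mod(μ,v) = K^μ(ModSet(μ,v)). -/
set_option linter.unusedVariables false

/-! ### Alphabet, effects, Dyck languages -/

abbrev Sig (n : ℕ) := Fin n × Bool

def letterEff {n : ℕ} (a : Sig n) : Fin n → ℤ :=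
  fun j => if j = a.1 then (if a.2 then 1 else -1) else 0

def wordEff {n : ℕ} (w : List (Sig n)) : Fin n → ℤ :=
  (w.map letterEff).sum

/-- The Dyck language `D_n`. -/
def Dyck (n : ℕ) : Language (Sig n) :=
  {w | wordEff w = 0 ∧ ∀ u, u <+: w → ∀ j, 0 ≤ wordEff u j}

/-- The coverability Dyck language `D_n^↑`. -/
def CovDyck (n : ℕ) : Language (Sig n) :=
  {w | ∀ u, u <+: w → ∀ j, 0 ≤ wordEff u j}

/-- The `ℤ`-Dyck language `D_n^ℤ`. -/
def ZDyck (n : ℕ) : Language (Sig n) :=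
  {w | wordEff w = 0}

/-! ### VASS -/

structure VASS (A : Type) where
  Q : Type
  C : Type
  finQ : Finite Q
  finC : Finite C
  E : Set (Q × Option A × (C → ℤ) × Q)
  finE : E.Finite

inductive VASS.NRun {A : Type} (V : VASS A) :
    (V.Q × (V.C → ℕ)) → List A → (V.Q × (V.C → ℕ)) → Prop
  | refl (cfg : V.Q × (V.C → ℕ)) : VASS.NRun V cfg [] cfg
  | step {q : V.Q} {c : V.C → ℕ} {a : Option A} {d : V.C → ℤ} {q' : V.Q}
      {c' : V.C → ℕ} {w : List A} {last : V.Q × (V.C → ℕ)} :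
      (q, a, d, q') ∈ V.E →
      (∀ j, (c' j : ℤ) = (c j : ℤ) + d j) →
      VASS.NRun V (q', c') w last →
      VASS.NRun V (q, c) (a.toList ++ w) last

/-- An initialized VASS: generalized initial/final configurations,
with `none` playing the role of `ω`. -/
structure InitVASS (A : Type) extends VASS A where
  qin : Q
  qout : Q
  cin : C → Option ℕ
  cout : C → Option ℕ

/-- The reachability language of an initialized VASS. -/
def InitVASS.lang {A : Type} (V : InitVASS A) : Language A :=
  {w | ∃ c0 cl : V.C → ℕ,
      V.toVASS.NRun (V.qin, c0) w (V.qout, cl) ∧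
      (∀ j m, V.cin j = some m → c0 j = m) ∧
      (∀ j m, V.cout j = some m → cl j = m)}

/-! ### Transducers -/

structure Transducer (G A : Type) where
  Q : Type
  finQ : Finite Q
  start : Q
  accept : Set Q
  trans : Set (Q × (Option G × Option A) × Q)
  finT : trans.Finite

inductive Transducer.Path {G A : Type} (T : Transducer G A) :
    T.Q → List G → List A → T.Q → Prop
  | refl (q : T.Q) : Transducer.Path T q [] [] q
  | step {q q' qf : T.Q} {g : Option G} {a : Option A} {u : List G} {v : List A} :
      (q, (g, a), q') ∈ T.trans →
      Transducer.Path T q' u v qf →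
      Transducer.Path T q (g.toList ++ u) (a.toList ++ v) qf

/-- The relation recognized by a transducer. -/
def Transducer.rel {G A : Type} (T : Transducer G A) (u : List G) (v : List A) : Prop :=
  ∃ qf ∈ T.accept, T.Path T.start u v qf

/-- `T⁻¹(L)`. -/
def Transducer.invImage {G A : Type} (T : Transducer G A) (L : Language A) : Language G :=
  {u | ∃ v ∈ L, T.rel u v}

/-! ### Regular separability -/

def RegSep {A : Type} (L1 L2 : Language A) : Prop :=
  ∃ R : Language A, R.IsRegular ∧ L1 ≤ R ∧ ∀ w ∈ R, w ∉ L2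

/-! ### Linear sets and regular approximations -/

structure LinSet (n : ℕ) where
  base : Fin n → ℤ
  periods : Set (Fin n → ℤ)
  finP : periods.Finite

def LinSet.toSet {n : ℕ} (L : LinSet n) : Set (Fin n → ℤ) :=
  {x | ∃ p ∈ AddSubmonoid.closure L.periods, x = L.base + p}

def inBox {n : ℕ} (k : ℕ) (x : Fin n → ℤ) : Prop :=
  ∀ j, -(k : ℤ) ≤ x j ∧ x j ≤ (k : ℤ)

/-- Reachability in the ε-NFA underlying the `k`-th regular approximation of `L`:
states are vectors in `[-k,k]^n`, letters move by their effect, ε-transitions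
subtract a period. -/
inductive KReach {n : ℕ} (L : LinSet n) (k : ℕ) :
    (Fin n → ℤ) → List (Sig n) → (Fin n → ℤ) → Prop
  | refl (x : Fin n → ℤ) (h : inBox k x) : KReach L k x [] x
  | letter {x y : Fin n → ℤ} {w : List (Sig n)} (a : Sig n)
      (h : inBox k x) (h' : inBox k (x + letterEff a)) :
      KReach L k (x + letterEff a) w y → KReach L k x (a :: w) y
  | eps {x y : Fin n → ℤ} {w : List (Sig n)} {p : Fin n → ℤ}
      (hp : p ∈ L.periods) (h : inBox k x) (h' : inBox k (x - p)) :
      KReach L k (x - p) w y → KReach L k x w y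

/-- The `k`-th regular approximation `K^k(L)`. -/
def KApprox {n : ℕ} (L : LinSet n) (k : ℕ) : Language (Sig n) :=
  {w | ∃ y, KReach L k 0 w y ∧ y ∈ L.toSet}

/-! ### The `⊕⁺` operation and the families `R_ℓ` -/

def posPlus {n : ℕ} (K L : Set (Fin n → ℤ)) : Set (Fin n → ℤ) :=
  {x | (∀ j, 0 ≤ x j) ∧ ∃ a ∈ K, (∀ j, 0 ≤ a j) ∧ ∃ b ∈ L, x = a + b}

def posFoldAux {n : ℕ} : Set (Fin n → ℤ) → List (Set (Fin n → ℤ)) → Set (Fin n → ℤ)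
  | S, [] => S
  | S, L :: Ls => posFoldAux (posPlus S L) Ls

/-- `posFold [L₁, …, L_ℓ] = L₁ ⊕⁺ ⋯ ⊕⁺ L_ℓ` (associated to the left); for `ℓ = 1`
it is `L₁` itself. -/
def posFold {n : ℕ} : List (Set (Fin n → ℤ)) → Set (Fin n → ℤ)
  | [] => ∅
  | L :: Ls => posFoldAux L Ls

/-- The family `R_ℓ`. -/
def RFam (n ℓ : ℕ) : Set (Language (Sig n)) :=
  {K | ∃ (k : ℕ) (Ls : List (LinSet n)), Ls.length = ℓ ∧
      (0 : Fin n → ℤ) ∉ posFold (Ls.map LinSet.toSet) ∧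
      K = (Ls.map (fun L => KApprox L k)).prod}

/-- `R_{≤ m} = ⋃_{1 ≤ i ≤ m} R_i`. -/
def RleFam (n m : ℕ) : Set (Language (Sig n)) :=
  ⋃ i ∈ Set.Icc 1 m, RFam n i

/-- `R = ⋃_{ℓ ≥ 1} R_ℓ`. -/
def RAll (n : ℕ) : Set (Language (Sig n)) :=
  ⋃ i ∈ Set.Ici 1, RFam n i

/-! ### Basic separator sets -/

def IsBasicSepSet {n : ℕ} (S : Language (Sig n)) (B : Set (Language (Sig n))) : Prop :=
  (∀ K ∈ B, K.IsRegular ∧ ∀ w ∈ K, w ∉ S) ∧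
  (∀ L : Language (Sig n), L.IsRegular → (∀ w ∈ L, w ∉ S) →
    ∃ F ⊆ B, F.Finite ∧ ∀ w ∈ L, ∃ K ∈ F, w ∈ K)

/-! Extra defs for specific statements -/

/-- `u ∼_A v`: the words induce the same state transformation in the DFA `M`. -/
def simEq {α σ : Type} (M : DFA α σ) (u v : List α) : Prop :=
  ∀ p : σ, M.evalFrom p u = M.evalFrom p v

/-- Assemble `w₀ m₁ w₁ ⋯ m_k w_k` over `Σ ⊎ Σ#` (`Sum.inl` = plain, `Sum.inr` = marked). -/
def assemble {α : Type} : List (List α) → List α → List (α ⊕ α)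
  | [], _ => []
  | w :: _, [] => w.map Sum.inl
  | w :: ws, m :: ms => w.map Sum.inl ++ Sum.inr m :: assemble ws ms

/-- The set of effects of a language. -/
def effSet {n : ℕ} (L : Language (Sig n)) : Set (Fin n → ℤ) :=
  {v | ∃ w ∈ L, wordEff w = v}

/-- `Mod(μ, v)`. -/
def ModLang (n μ : ℕ) (v : Fin n → ℤ) : Language (Sig n) :=
  {w | ∀ j, wordEff w j ≡ v j [ZMOD (μ : ℤ)]}

/-- `ModSet(μ, v)`: base `v`, periods `{±μ·e_i}`. -/
def ModSet (n μ : ℕ) (v : Fin n → ℤ) : LinSet n where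
  base := v
  periods := (Set.range fun i : Fin n => (μ : ℤ) • Pi.single i (1 : ℤ)) ∪
    (Set.range fun i : Fin n => -((μ : ℤ) • Pi.single i (1 : ℤ)))
  finP := (Set.finite_range _).union (Set.finite_range _)

/-- `Cov(k, i)`. -/
def CovLang (n k : ℕ) (i : Fin n) : Language (Sig n) :=
  {x | ∃ w w', x = w ++ w' ∧ wordEff w i < 0 ∧
      ∀ u, u <+: w → u ≠ w → 0 ≤ wordEff u i ∧ wordEff u i ≤ (k : ℤ)}

/-- `L_{neg,i}`: base `-e_i`, periods `{±e_j : j ≠ i}`. -/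
def LNeg (n : ℕ) (i : Fin n) : LinSet n where
  base := -Pi.single i 1
  periods := ((fun j : Fin n => Pi.single j (1 : ℤ)) '' {j | j ≠ i}) ∪
    ((fun j : Fin n => -Pi.single j (1 : ℤ)) '' {j | j ≠ i})
  finP := ((Set.toFinite _).image _).union ((Set.toFinite _).image _)

/-- `Z`: base `0`, periods `{±e_j}`. -/
def ZSet (n : ℕ) : LinSet n where
  base := 0
  periods := (Set.range fun j : Fin n => Pi.single j (1 : ℤ)) ∪
    (Set.range fun j : Fin n => -Pi.single j (1 : ℤ))
  finP := (Set.finite_range _).union (Set.finite_range _)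

/-! The language `C_ℓ` over `Σ₂` -/

def ltrA1 : Sig 2 := (0, true)
def ltrA2 : Sig 2 := (1, true)
def ltrB1 : Sig 2 := (0, false)
def ltrB2 : Sig 2 := (1, false)

def fwdWord (j : ℕ) : List (Sig 2) := ltrA1 :: List.replicate j ltrA2
def bwdWord (j : ℕ) : List (Sig 2) := ltrB1 :: List.replicate j ltrB2

def segLang (j : ℕ) : Language (Sig 2) :=
  KStar.kstar ({fwdWord j, bwdWord j} : Language (Sig 2))

def aPlusLang : Language (Sig 2) :=
  {w | ∃ m : ℕ, 0 < m ∧ w = List.replicate m ltrA1}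

def CLang (ℓ : ℕ) : Language (Sig 2) :=
  aPlusLang * ((List.range ℓ).map (fun j => segLang (j + 1))).prod


section Stmt12Aux

variable {n μ : ℕ}

lemma wordEff_cons {n : ℕ} (a : Sig n) (w : List (Sig n)) :
    wordEff (a :: w) = letterEff a + wordEff w := by
  simp [wordEff]

lemma period_dvd (v : Fin n → ℤ) {p : Fin n → ℤ}
    (hp : p ∈ (ModSet n μ v).periods) (j : Fin n) : (μ : ℤ) ∣ p j := by
  rcases hp with ⟨i, rfl⟩ | ⟨i, rfl⟩ <;>
  · simp only [Pi.smul_apply, Pi.neg_apply, Pi.single_apply, smul_eq_mul, mul_ite,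
      mul_one, mul_zero, dvd_neg]
    split <;> simp

lemma kreach_modeq (v : Fin n → ℤ) {x y : Fin n → ℤ} {w : List (Sig n)}
    (h : KReach (ModSet n μ v) μ x w y) :
    ∀ j, y j ≡ x j + wordEff w j [ZMOD (μ : ℤ)] := by
  induction h with
  | refl x hx =>
      intro j
      simpa [wordEff] using Int.ModEq.refl (x j)
  | letter a hx hx' h ih =>
      intro j
      have := ih j
      rw [wordEff_cons]
      simpa [Pi.add_apply, add_assoc] using this
  | @eps x y w p hp hx hx' h ih =>
      intro j
      have h1 := ih j
      have h2 : (x - p) j ≡ x j [ZMOD (μ : ℤ)] := by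
        refine Int.modEq_iff_dvd.mpr ?_
        simpa [Pi.sub_apply] using period_dvd v hp j
      exact h1.trans (Int.ModEq.add_right _ h2)

lemma zsmul_mem_submonoid {M : Type*} [AddCommGroup M] {S : AddSubmonoid M} {g : M}
    (hg : g ∈ S) (hg' : -g ∈ S) (c : ℤ) : c • g ∈ S := by
  rcases le_or_gt 0 c with h | h
  · lift c to ℕ using h
    simpa [natCast_zsmul] using AddSubmonoid.nsmul_mem S hg c
  · have hc : ((-c).toNat : ℤ) = -c := Int.toNat_of_nonneg (by omega)
    have heq : c • g = (-c) • (-g) := by rw [neg_smul, smul_neg, neg_neg]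
    rw [heq, ← hc, natCast_zsmul]
    exact AddSubmonoid.nsmul_mem S hg' _

lemma closure_dvd (v : Fin n → ℤ) {p : Fin n → ℤ}
    (hp : p ∈ AddSubmonoid.closure (ModSet n μ v).periods) (j : Fin n) :
    (μ : ℤ) ∣ p j := by
  have hle : AddSubmonoid.closure (ModSet n μ v).periods ≤
      { carrier := {x : Fin n → ℤ | ∀ j, (μ : ℤ) ∣ x j}
        add_mem' := fun ha hb j => dvd_add (ha j) (hb j)
        zero_mem' := fun j => dvd_zero _ } :=
    AddSubmonoid.closure_le.mpr (fun q hq j => period_dvd v hq j)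
  exact hle hp j

lemma dvd_mem_closure (v : Fin n → ℤ) {p : Fin n → ℤ}
    (hp : ∀ j, (μ : ℤ) ∣ p j) :
    p ∈ AddSubmonoid.closure (ModSet n μ v).periods := by
  have key : ∀ j : Fin n, (p j / (μ : ℤ)) • ((μ : ℤ) • (Pi.single j (1 : ℤ) : Fin n → ℤ))
      = Pi.single j (p j) := by
    intro j
    ext k
    by_cases hk : k = j
    · subst hk
      simp only [Pi.smul_apply, smul_eq_mul, Pi.single_eq_same, mul_one]
      exact Int.ediv_mul_cancel (hp k)
    · simp [Pi.single_apply, hk]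
  have hrep : p = ∑ j : Fin n, (p j / (μ : ℤ)) • ((μ : ℤ) • Pi.single j (1 : ℤ)) := by
    rw [funext key]
    exact (Finset.univ_sum_single p).symm
  rw [hrep]
  refine sum_mem fun j _ => ?_
  refine zsmul_mem_submonoid ?_ ?_ _
  · exact AddSubmonoid.subset_closure (Or.inl ⟨j, rfl⟩)
  · exact AddSubmonoid.subset_closure (Or.inr ⟨j, rfl⟩)

lemma inv_inBox (hμ : 1 ≤ μ) {x : Fin n → ℤ} (hx : ∀ j, 0 ≤ x j ∧ x j < (μ : ℤ)) :
    inBox μ x := by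
  intro j
  have := hx j
  constructor <;> omega

lemma step_exists (hμ : 1 ≤ μ) (v : Fin n → ℤ) {x : Fin n → ℤ}
    (hx : ∀ j, 0 ≤ x j ∧ x j < (μ : ℤ)) (a : Sig n) :
    ∃ z', (∀ j, 0 ≤ z' j ∧ z' j < (μ : ℤ)) ∧
      (∀ j, z' j ≡ x j + letterEff a j [ZMOD (μ : ℤ)]) ∧
      (∀ w y, KReach (ModSet n μ v) μ z' w y → KReach (ModSet n μ v) μ x (a :: w) y) := by
  have heff0 : ∀ j, j ≠ a.1 → letterEff a j = 0 := by
    intro j hj; simp [letterEff, hj]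
  have heff1 : letterEff a a.1 = 1 ∨ letterEff a a.1 = -1 := by
    cases h2 : a.2
    · exact Or.inr (by simp [letterEff, h2])
    · exact Or.inl (by simp [letterEff, h2])
  have hxbox : inBox μ x := inv_inBox hμ hx
  have hzbox : inBox μ (x + letterEff a) := by
    intro j
    have h1 := hx j
    by_cases hj : j = a.1
    · subst hj
      rcases heff1 with h | h <;> simp only [Pi.add_apply, h] <;> constructor <;> omega
    · simp only [Pi.add_apply, heff0 j hj, add_zero]
      constructor <;> omega
  by_cases hgood : ∀ j, 0 ≤ (x + letterEff a) j ∧ (x + letterEff a) j < (μ : ℤ)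
  · exact ⟨x + letterEff a, hgood, fun j => Int.ModEq.refl _,
      fun w y h => KReach.letter a hxbox hzbox h⟩
  push_neg at hgood
  obtain ⟨i0, hi0⟩ := hgood
  have hii : i0 = a.1 := by
    by_contra hne
    have h1 := hx i0
    simp only [Pi.add_apply, heff0 i0 hne, add_zero] at hi0
    omega
  subst hii
  have hP : ∀ j, ((μ : ℤ) • (Pi.single a.1 (1 : ℤ) : Fin n → ℤ)) j
      = if j = a.1 then (μ : ℤ) else 0 := by
    intro j
    simp [Pi.single_apply, mul_ite]
  rcases heff1 with heff | heff
  · -- letter adds 1 at a.1; overflow: x a.1 = μ - 1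
    have hxi : x a.1 = (μ : ℤ) - 1 := by
      have h1 := hx a.1
      have h2 := hzbox a.1
      simp only [Pi.add_apply, heff] at hi0 h2
      omega
    have hz' : ∀ j, ((x + letterEff a) - ((μ : ℤ) • (Pi.single a.1 (1 : ℤ) : Fin n → ℤ))) j
        = x j + letterEff a j - (if j = a.1 then (μ : ℤ) else 0) := by
      intro j
      rw [Pi.sub_apply, Pi.add_apply, hP j]
    refine ⟨(x + letterEff a) - ((μ : ℤ) • (Pi.single a.1 (1 : ℤ) : Fin n → ℤ)), ?_, ?_, ?_⟩
    · intro j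
      rw [hz' j]
      by_cases hj : j = a.1
      · subst hj
        rw [heff, hxi, if_pos rfl]
        constructor <;> omega
      · rw [heff0 j hj, if_neg hj]
        have h1 := hx j
        constructor <;> omega
    · intro j
      refine Int.modEq_iff_dvd.mpr ?_
      have heq : x j + letterEff a j
            - ((x + letterEff a) - ((μ : ℤ) • (Pi.single a.1 (1 : ℤ) : Fin n → ℤ))) j
          = if j = a.1 then (μ : ℤ) else 0 := by
        rw [hz' j]; ring
      rw [heq]
      split <;> simp
    · intro w y h
      have hp : ((μ : ℤ) • (Pi.single a.1 (1 : ℤ) : Fin n → ℤ)) ∈ (ModSet n μ v).periods :=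
        Or.inl ⟨a.1, rfl⟩
      have hbox' : inBox μ ((x + letterEff a) - ((μ : ℤ) • (Pi.single a.1 (1 : ℤ) : Fin n → ℤ))) := by
        intro j
        rw [hz' j]
        by_cases hj : j = a.1
        · subst hj
          rw [heff, hxi, if_pos rfl]
          constructor <;> omega
        · rw [heff0 j hj, if_neg hj]
          have h1 := hx j
          constructor <;> omega
      exact KReach.letter a hxbox hzbox (KReach.eps hp hzbox hbox' h)
  · -- letter subtracts 1 at a.1; underflow: x a.1 = 0
    have hxi : x a.1 = 0 := by
      have h1 := hx a.1
      have h2 := hzbox a.1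
      simp only [Pi.add_apply, heff] at hi0 h2
      omega
    have hz' : ∀ j, ((x + letterEff a) - (-((μ : ℤ) • (Pi.single a.1 (1 : ℤ) : Fin n → ℤ)))) j
        = x j + letterEff a j + (if j = a.1 then (μ : ℤ) else 0) := by
      intro j
      rw [Pi.sub_apply, Pi.add_apply, Pi.neg_apply, hP j]
      ring
    refine ⟨(x + letterEff a) - (-((μ : ℤ) • (Pi.single a.1 (1 : ℤ) : Fin n → ℤ))), ?_, ?_, ?_⟩
    · intro j
      rw [hz' j]
      by_cases hj : j = a.1
      · subst hj
        rw [heff, hxi, if_pos rfl]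
        constructor <;> omega
      · rw [heff0 j hj, if_neg hj]
        have h1 := hx j
        constructor <;> omega
    · intro j
      refine Int.modEq_iff_dvd.mpr ?_
      have heq : x j + letterEff a j
            - ((x + letterEff a) - (-((μ : ℤ) • (Pi.single a.1 (1 : ℤ) : Fin n → ℤ)))) j
          = -(if j = a.1 then (μ : ℤ) else 0) := by
        rw [hz' j]; ring
      rw [heq]
      split <;> simp
    · intro w y h
      have hp : (-((μ : ℤ) • (Pi.single a.1 (1 : ℤ) : Fin n → ℤ))) ∈ (ModSet n μ v).periods :=
        Or.inr ⟨a.1, rfl⟩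
      have hbox' : inBox μ ((x + letterEff a) - (-((μ : ℤ) • (Pi.single a.1 (1 : ℤ) : Fin n → ℤ)))) := by
        intro j
        rw [hz' j]
        by_cases hj : j = a.1
        · subst hj
          rw [heff, hxi, if_pos rfl]
          constructor <;> omega
        · rw [heff0 j hj, if_neg hj]
          have h1 := hx j
          constructor <;> omega
      exact KReach.letter a hxbox hzbox (KReach.eps hp hzbox hbox' h)

lemma kreach_build (hμ : 1 ≤ μ) (v : Fin n → ℤ) :
    ∀ (w : List (Sig n)) (x : Fin n → ℤ), (∀ j, 0 ≤ x j ∧ x j < (μ : ℤ)) →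
    ∃ y, KReach (ModSet n μ v) μ x w y ∧ (∀ j, 0 ≤ y j ∧ y j < (μ : ℤ)) ∧
      ∀ j, y j ≡ x j + wordEff w j [ZMOD (μ : ℤ)] := by
  intro w
  induction w with
  | nil =>
      intro x hx
      exact ⟨x, KReach.refl x (inv_inBox hμ hx), hx,
        fun j => by simpa [wordEff] using Int.ModEq.refl (x j)⟩
  | cons a w ih =>
      intro x hx
      obtain ⟨z', hz'1, hz'2, hz'3⟩ := step_exists hμ v hx a
      obtain ⟨y, hy1, hy2, hy3⟩ := ih z' hz'1
      refine ⟨y, hz'3 w y hy1, hy2, fun j => ?_⟩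
      have := (hy3 j).trans (Int.ModEq.add_right _ (hz'2 j))
      rw [wordEff_cons]
      simpa [Pi.add_apply, add_assoc] using this

end Stmt12Aux

theorem stmt12 (n : ℕ) (hn : 1 ≤ n) (μ : ℕ) (hμ : 1 ≤ μ) (v : Fin n → ℤ)
    (hv : ∀ j, 0 ≤ v j ∧ v j < (μ : ℤ)) :
    ModLang n μ v = KApprox (ModSet n μ v) μ := by
  ext w
  constructor
  · intro hw
    obtain ⟨y, hy1, hy2, hy3⟩ := kreach_build hμ v w 0
      (fun j => ⟨le_refl 0, by exact_mod_cast Nat.cast_pos.mpr hμ⟩)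
    refine ⟨y, hy1, y - v, dvd_mem_closure v (fun j => ?_), by
      show y = v + (y - v); ring⟩
    have h1 : y j ≡ wordEff w j [ZMOD (μ : ℤ)] := by
      simpa using hy3 j
    have h2 : wordEff w j ≡ v j [ZMOD (μ : ℤ)] := hw j
    simpa [Pi.sub_apply] using ((h1.trans h2).symm.dvd)
  · rintro ⟨y, hr, p, hp, hyp⟩
    intro j
    have h1 : y j ≡ wordEff w j [ZMOD (μ : ℤ)] := by
      simpa using kreach_modeq v hr j
    have h2 : (μ : ℤ) ∣ p j := closure_dvd v hp j
    have h3 : y j = v j + p j := by rw [hyp]; simp [ModSet]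
    have h5 : (0 : ℤ) ≡ p j [ZMOD (μ : ℤ)] := Int.modEq_iff_dvd.mpr (by simpa using h2)
    have h4 : y j ≡ v j [ZMOD (μ : ℤ)] := by
      rw [h3]
      simpa using (Int.ModEq.add_left (v j) h5.symm)
    exact h1.symm.trans h4
end

section
/- Let u ∈ Σ_n^*, let L ⊆ ℤ^n be a linear set with representation (b, P), and let k ∈ ℕ. If there exist words w, w'' ∈ Σ_n^* and i ≥ (2k+1)^n with w·u^i·w'' ∈ K^k(L), then there exists a nonzero y ∈ ℕ with y·Δ(u) ∈ P^*. -/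
set_option linter.unusedVariables false

/-! ### Auxiliary lemmas for stmt14 -/

lemma wordEff_append {n : ℕ} (v w : List (Sig n)) :
    wordEff (v ++ w) = wordEff v + wordEff w := by
  simp [wordEff]

lemma wordEff_flatten_replicate {n : ℕ} (u : List (Sig n)) (m : ℕ) :
    wordEff ((List.replicate m u).flatten) = (m : ℤ) • wordEff u := by
  induction m with
  | zero => simp [wordEff]
  | succ m ih =>
      rw [List.replicate_succ, List.flatten_cons, wordEff_append, ih]
      push_cast
      rw [add_smul, one_smul]
      abel

lemma KReach.box_right {n : ℕ} {L : LinSet n} {k : ℕ} {x y : Fin n → ℤ}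
    {w : List (Sig n)} (h : KReach L k x w y) : inBox k y := by
  induction h <;> assumption

lemma KReach.box_left {n : ℕ} {L : LinSet n} {k : ℕ} {x y : Fin n → ℤ}
    {w : List (Sig n)} (h : KReach L k x w y) : inBox k x := by
  induction h <;> assumption

lemma KReach.split {n : ℕ} {L : LinSet n} {k : ℕ} :
    ∀ {x y : Fin n → ℤ} {w : List (Sig n)}, KReach L k x w y →
      ∀ v1 v2, w = v1 ++ v2 →
      ∃ z, KReach L k x v1 z ∧ KReach L k z v2 y := by
  intro x y w h
  induction h with
  | refl x hx =>
      intro v1 v2 he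
      obtain ⟨rfl, rfl⟩ := List.append_eq_nil_iff.mp he.symm
      exact ⟨x, .refl x hx, .refl x hx⟩
  | letter a hx hx' hrest ih =>
      intro v1 v2 he
      cases v1 with
      | nil =>
          exact ⟨_, .refl _ hx, by rw [List.nil_append] at he; exact he ▸ .letter a hx hx' hrest⟩
      | cons c v1' =>
          rw [List.cons_append] at he
          obtain ⟨rfl, hw⟩ := List.cons_eq_cons.mp he
          obtain ⟨z, h1, h2⟩ := ih v1' v2 hw
          exact ⟨z, .letter a hx hx' h1, h2⟩
  | eps hp hx hx' hrest ih =>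
      intro v1 v2 he
      obtain ⟨z, h1, h2⟩ := ih v1 v2 he
      exact ⟨z, .eps hp hx hx' h1, h2⟩

lemma KReach.trans {n : ℕ} {L : LinSet n} {k : ℕ} {x z y : Fin n → ℤ}
    {v1 v2 : List (Sig n)} (h1 : KReach L k x v1 z) (h2 : KReach L k z v2 y) :
    KReach L k x (v1 ++ v2) y := by
  induction h1 with
  | refl => simpa
  | letter a hx hx' _ ih => exact .letter a hx hx' (ih h2)
  | eps hp hx hx' _ ih => exact .eps hp hx hx' (ih h2)

lemma KReach.effect {n : ℕ} {L : LinSet n} {k : ℕ} {x y : Fin n → ℤ}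
    {w : List (Sig n)} (h : KReach L k x w y) :
    ∃ q ∈ AddSubmonoid.closure L.periods, y + q = x + wordEff w := by
  induction h with
  | refl x hx => exact ⟨0, zero_mem _, by simp [wordEff]⟩
  | @letter x y w a hx hx' _ ih =>
      obtain ⟨q, hq, he⟩ := ih
      refine ⟨q, hq, ?_⟩
      have hw : wordEff (a :: w) = letterEff a + wordEff w := by
        simp [wordEff]
      rw [hw, he]; abel
  | @eps x y w p hp hx hx' _ ih =>
      obtain ⟨q, hq, he⟩ := ih
      refine ⟨q + p, add_mem hq (AddSubmonoid.subset_closure hp), ?_⟩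
      calc y + (q + p) = (y + q) + p := by abel
        _ = (x - p + wordEff w) + p := by rw [he]
        _ = x + wordEff w := by abel

lemma KReach.chain {n : ℕ} {L : LinSet n} {k : ℕ} (u : List (Sig n)) :
    ∀ (i : ℕ) (z y : Fin n → ℤ), KReach L k z ((List.replicate i u).flatten) y →
      ∃ s : ℕ → (Fin n → ℤ), s 0 = z ∧
        (∀ j < i, KReach L k (s j) u (s (j + 1))) ∧ KReach L k (s i) [] y := by
  intro i
  induction i with
  | zero =>
      intro z y h
      exact ⟨fun _ => z, rfl, fun j hj => absurd hj (by omega), by simpa using h⟩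
  | succ i ih =>
      intro z y h
      rw [List.replicate_succ, List.flatten_cons] at h
      obtain ⟨z1, h1, h2⟩ := h.split u _ rfl
      obtain ⟨s', hs0, hchain, hlast⟩ := ih z1 y h2
      refine ⟨fun j => Nat.casesOn j z s', rfl, ?_, hlast⟩
      intro j hj
      cases j with
      | zero => simpa [hs0] using h1
      | succ m => exact hchain m (by omega)

lemma KReach.compose_chain {n : ℕ} {L : LinSet n} {k : ℕ} {u : List (Sig n)}
    {s : ℕ → (Fin n → ℤ)} :
    ∀ (m j : ℕ), inBox k (s j) →
      (∀ t, j ≤ t → t < j + m → KReach L k (s t) u (s (t + 1))) →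
      KReach L k (s j) ((List.replicate m u).flatten) (s (j + m)) := by
  intro m
  induction m with
  | zero => intro j hbox _; simpa using KReach.refl (s j) hbox
  | succ m ih =>
      intro j hbox hch
      have h1 : KReach L k (s j) u (s (j + 1)) := hch j le_rfl (by omega)
      have h2 := ih (j + 1) h1.box_right (fun t ht ht' => hch t (by omega) (by omega))
      rw [List.replicate_succ, List.flatten_cons]
      have := h1.trans h2
      simpa [show j + 1 + m = j + (m + 1) by omega] using this

theorem stmt14 {n : ℕ} (u : List (Sig n)) (L : LinSet n) (k : ℕ)
    (h : ∃ (w w'' : List (Sig n)) (i : ℕ), (2 * k + 1) ^ n ≤ i ∧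
      w ++ (List.replicate i u).flatten ++ w'' ∈ KApprox L k) :
    ∃ y : ℕ, y ≠ 0 ∧ (y : ℤ) • wordEff u ∈ AddSubmonoid.closure L.periods := by
  obtain ⟨w, w'', i, hi, yfin, hrun, -⟩ := h
  -- split off w and w''
  obtain ⟨z0, -, hrun2⟩ := hrun.split w _ (by rw [List.append_assoc])
  obtain ⟨zmid, hmid, -⟩ := hrun2.split ((List.replicate i u).flatten) w'' rfl
  -- chain of intermediate states
  obtain ⟨s, hs0, hchain, hlast⟩ := KReach.chain u i z0 zmid hmid
  have hbox : ∀ j ≤ i, inBox k (s j) := by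
    intro j hj
    rcases Nat.eq_or_lt_of_le hj with rfl | hj'
    · exact hlast.box_left
    · exact (hchain j hj').box_left
  -- pigeonhole on states in the box
  have hcard : Fintype.card (Fin n → Fin (2 * k + 1)) < Fintype.card (Fin (i + 1)) := by
    simp only [Fintype.card_fun, Fintype.card_fin]
    omega
  set g : Fin (i + 1) → (Fin n → Fin (2 * k + 1)) :=
    fun j t => ⟨(s j t + k).toNat % (2 * k + 1), Nat.mod_lt _ (by omega)⟩ with hg
  obtain ⟨a, b, hab, heq⟩ := Fintype.exists_ne_map_eq_of_card_lt g hcard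
  -- from g-equality deduce state equality
  have hstate : ∀ (a b : Fin (i + 1)), g a = g b → s a = s b := by
    intro a b hab'
    funext t
    have ha := (hbox a (by omega) t)
    have hb := (hbox b (by omega) t)
    have h1 : ((s a t + k).toNat : ℤ) = s a t + k := Int.toNat_of_nonneg (by omega)
    have h2 : ((s b t + k).toNat : ℤ) = s b t + k := Int.toNat_of_nonneg (by omega)
    have hma : (s a t + k).toNat % (2 * k + 1) = (s a t + k).toNat :=
      Nat.mod_eq_of_lt (by omega)
    have hmb : (s b t + k).toNat % (2 * k + 1) = (s b t + k).toNat :=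
      Nat.mod_eq_of_lt (by omega)
    have := congrFun hab' t
    have hval : (s a t + k).toNat % (2 * k + 1) = (s b t + k).toNat % (2 * k + 1) := by
      simpa [hg] using congrArg Fin.val this
    rw [hma, hmb] at hval
    omega
  have hseq : s a = s b := hstate a b heq
  -- wlog a < b
  have key : ∀ (a b : Fin (i + 1)), (a : ℕ) < b → s a = s b →
      ∃ y : ℕ, y ≠ 0 ∧ (y : ℤ) • wordEff u ∈ AddSubmonoid.closure L.periods := by
    intro a b hlt hseq
    set m := (b : ℕ) - a with hm
    have hrun3 : KReach L k (s a) ((List.replicate m u).flatten) (s ((a : ℕ) + m)) :=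
      KReach.compose_chain m a (hbox a (by omega))
        (fun t ht ht' => hchain t (by omega))
    have ham : (a : ℕ) + m = b := by omega
    rw [ham] at hrun3
    obtain ⟨q, hq, hqe⟩ := hrun3.effect
    rw [← hseq, wordEff_flatten_replicate] at hqe
    have : q = (m : ℤ) • wordEff u := by
      have := add_left_cancel hqe
      exact this
    exact ⟨m, by omega, this ▸ hq⟩
  rcases lt_or_gt_of_ne (fun h => hab (by exact h)) with hlt | hlt
  · exact key a b (by exact_mod_cast hlt) hseq
  · exact key b a (by exact_mod_cast hlt) hseq.symm
end
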